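/- Let R be a commutative ring and M a finitely generated R-module with trace ideal τ(M) = R. Then the natural ring homomorphism R → Z(End_R(M)), sending r ∈ R to multiplication by r, is an isomorphism onto the center of End_R(M); that is, M is balanced. -/
import Mathlib


universe u v

/-- The trace ideal of a module: the ideal generated by all images of maps `M →ₗ[R] R`. -/
def traceIdeal (R : Type u) (M : Type v) [CommRing R] [AddCommGroup M] [Module R M] :
    Ideal R :=
  ⨆ f : M →ₗ[R] R, LinearMap.range f

theorem apply_mem_traceIdeal {R : Type u} {M : Type v} [CommRing R] [AddCommGroup M]
    [Module R M] (f : M →ₗ[R] R) (m : M) : f m ∈ traceIdeal R M :=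
  Submodule.mem_iSup_of_mem f (LinearMap.mem_range_self f m)

/-- `M` is balanced if the natural map `R → Z(End_R M)`, sending `r` to multiplication by
`r`, is an isomorphism onto the center of `End_R M`. -/
def IsBalanced (R : Type u) (M : Type v) [CommRing R] [AddCommGroup M] [Module R M] : Prop :=
  Function.Bijective fun r : R =>
    (⟨algebraMap R (Module.End R M) r, Subalgebra.algebraMap_mem _ r⟩ :
      Subalgebra.center R (Module.End R M))

/-- Let `R` be a commutative ring and `M` a finitely generated `R`-module with trace ideal
`τ(M) = R`.  Then `M` is balanced: the natural map `R → Z(End_R M)` is an isomorphism onto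
the center of `End_R(M)`. -/
theorem balanced_of_traceIdeal_eq_top (R : Type u) (M : Type v) [CommRing R]
    [AddCommGroup M] [Module R M] [Module.Finite R M]
    (htrace : traceIdeal R M = ⊤) :
    IsBalanced R M := by
  have h1 : (1 : R) ∈ traceIdeal R M := htrace ▸ Submodule.mem_top
  rw [traceIdeal, Submodule.mem_iSup_iff_exists_finsupp] at h1
  obtain ⟨a, ha, hsum⟩ := h1
  choose m hm using fun f : M →ₗ[R] R => LinearMap.mem_range.mp (ha f)
  rw [Finsupp.sum] at hsum
  constructor
  · intro r s h
    have h' : ∀ x : M, r • x = s • x := by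
      intro x
      have := congrArg Subtype.val h
      have := congrFun (congrArg DFunLike.coe this) x
      simpa [Module.algebraMap_end_apply] using this
    have key : ∀ f ∈ a.support, r * (f (m f)) = s * (f (m f)) := by
      intro f _
      have := congrArg f (h' (m f))
      simpa [map_smul, smul_eq_mul] using this
    calc r = r * ∑ f ∈ a.support, f (m f) := by
            simp only [hm]; rw [hsum, mul_one]
      _ = ∑ f ∈ a.support, r * f (m f) := Finset.mul_sum _ _ _
      _ = ∑ f ∈ a.support, s * f (m f) := Finset.sum_congr rfl key
      _ = s * ∑ f ∈ a.support, f (m f) := (Finset.mul_sum _ _ _).symm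
      _ = s := by simp only [hm]; rw [hsum, mul_one]
  · rintro ⟨φ, hφ⟩
    refine ⟨∑ f ∈ a.support, f (φ (m f)), Subtype.ext ?_⟩
    ext x
    have key : ∀ f : M →ₗ[R] R, f (φ (m f)) • x = f (m f) • φ x := by
      intro f
      have hc := Subalgebra.mem_center_iff.mp hφ (LinearMap.toSpanSingleton R M x ∘ₗ f)
      have := congrFun (congrArg DFunLike.coe hc) (m f)
      simpa [Module.End.mul_apply, LinearMap.toSpanSingleton_apply] using this
    calc (algebraMap R (Module.End R M) (∑ f ∈ a.support, f (φ (m f)))) x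
        = (∑ f ∈ a.support, f (φ (m f))) • x := rfl
      _ = ∑ f ∈ a.support, f (φ (m f)) • x := Finset.sum_smul
      _ = ∑ f ∈ a.support, f (m f) • φ x := Finset.sum_congr rfl fun f _ => key f
      _ = (∑ f ∈ a.support, f (m f)) • φ x := Finset.sum_smul.symm
      _ = φ x := by simp only [hm]; rw [hsum, one_smul]
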